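/- For a prime q and integers m, n coprime to q, the sum over even primitive Dirichlet characters χ modulo q of χ̄(mn)·τ(χ)² equals (1/2)·φ(q)·Σ_{±} S(1, ±mn; q) − 1, where S(a,b;q) = Σ_{x mod q, (x,q)=1} e((ax + b·x̄)/q) is the Kloosterman sum. -/

import Mathlib

open Finset

/-- `e x = exp(2πix)`. -/
noncomputable def e (x : ℝ) : ℂ := Complex.exp (2 * Real.pi * Complex.I * x)

/-- The Gauss sum `τ(χ) = Σ_{a mod q} χ(a) e(a/q)`. -/
noncomputable def gaussSum' {q : ℕ} [NeZero q] (χ : DirichletCharacter ℂ q) : ℂ :=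
  ∑ a : ZMod q, χ a * e ((a.val : ℝ) / q)

/-- The Kloosterman sum `S(a,b;q) = Σ_{x mod q, (x,q)=1} e((ax + b·x̄)/q)`. -/
noncomputable def kloosterman {q : ℕ} [NeZero q] (a b : ZMod q) : ℂ :=
  ∑ x : (ZMod q)ˣ, e (((a * (x : ZMod q) + b * ((x⁻¹ : (ZMod q)ˣ) : ZMod q)).val : ℝ) / q)

/-!
Over the units, `τ(χ)² = Σ_{a,b} χ(ab) ψ(a) ψ(b)`; weighting by `χ̄(c)` and summing over all
characters mod `q`, orthogonality keeps only the pairs with `ab = c`, so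
`Σ_χ χ̄(c) τ(χ)² = φ(q) S(1,c;q)`. The even characters are cut out by `(1 + χ(-1))/2`, and
`χ(-1) χ̄(c) = χ̄(-c)` turns this into `½ φ(q) (S(1,c;q) + S(1,-c;q))`. For prime `q` the primitive
characters are exactly the nontrivial ones, and the trivial character, being even, contributes
`τ(1)² = (-1)² = 1`.
-/

lemma MulChar.sum_mul_eq_sum_units {R R' : Type*} [CommMonoid R] [Fintype R] [DecidableEq R]
    [CommSemiring R'] (χ : MulChar R R') (f : R → R') : ∑ a, χ a * f a = ∑ u : Rˣ, χ u * f u :=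
  (Fintype.sum_of_injective _ Units.val_injective _ _
    (fun a ha => by rw [χ.map_nonunit fun hu => ha hu, zero_mul]) fun _ => rfl).symm

lemma gaussSum_eq_sum_units {R R' : Type*} [CommRing R] [Fintype R] [DecidableEq R] [CommRing R']
    (χ : MulChar R R') (ψ : AddChar R R') : gaussSum χ ψ = ∑ u : Rˣ, χ u * ψ u :=
  χ.sum_mul_eq_sum_units ψ

lemma MulChar.starRingEnd_apply_coe_unit {R : Type*} [CommRing R] [Finite Rˣ] (χ : MulChar R ℂ)
    (u : Rˣ) : starRingEnd ℂ (χ u) = χ ↑u⁻¹ := by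
  rw [starRingEnd_apply, star_apply', inv_apply, Ring.inverse_unit]

section

variable {q : ℕ} [NeZero q]

lemma e_val_div_eq_stdAddChar (x : ZMod q) : e ((x.val : ℝ) / q) = ZMod.stdAddChar x := by
  rw [ZMod.stdAddChar_apply, ZMod.toCircle_apply, e]
  push_cast
  ring_nf

lemma gaussSum'_eq_gaussSum (χ : DirichletCharacter ℂ q) :
    gaussSum' χ = gaussSum χ ZMod.stdAddChar := by
  simp only [gaussSum', gaussSum, e_val_div_eq_stdAddChar]

lemma kloosterman_one_eq_sum_stdAddChar (b : ZMod q) :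
    kloosterman 1 b
      = ∑ u : (ZMod q)ˣ, ZMod.stdAddChar (u : ZMod q) * ZMod.stdAddChar (b * ↑u⁻¹ : ZMod q) := by
  simp only [kloosterman, e_val_div_eq_stdAddChar, one_mul, AddChar.map_add_eq_mul]

theorem sum_conj_mul_gaussSum_sq (ψ : AddChar (ZMod q) ℂ) (c : (ZMod q)ˣ) :
    ∑ χ : DirichletCharacter ℂ q, starRingEnd ℂ (χ c) * gaussSum χ ψ ^ 2
      = q.totient * ∑ u : (ZMod q)ˣ, ψ u * ψ (c * ↑u⁻¹) := by
  have expand (χ : DirichletCharacter ℂ q) : starRingEnd ℂ (χ c) * gaussSum χ ψ ^ 2 =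
      ∑ a : (ZMod q)ˣ, ∑ b : (ZMod q)ˣ, ψ a * ψ b * (χ (c : ZMod q)⁻¹ * χ (a * b : ZMod q)) := by
    rw [χ.starRingEnd_apply_coe_unit, ← ZMod.inv_coe_unit, gaussSum_eq_sum_units, sq,
      sum_mul_sum, mul_sum]
    refine sum_congr rfl fun a _ => ?_
    rw [mul_sum]
    exact sum_congr rfl fun b _ => by rw [map_mul]; ring
  have orth (a b : (ZMod q)ˣ) :
      ∑ χ : DirichletCharacter ℂ q, χ (c : ZMod q)⁻¹ * χ (a * b : ZMod q)
        = if b = a⁻¹ * c then (q.totient : ℂ) else 0 := by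
    rw [DirichletCharacter.sum_char_inv_mul_char_eq ℂ c.isUnit]
    congr 1
    rw [eq_inv_mul_iff_mul_eq, eq_comm (a := (c : ZMod q)), ← Units.val_mul, Units.val_inj]
  calc ∑ χ : DirichletCharacter ℂ q, starRingEnd ℂ (χ c) * gaussSum χ ψ ^ 2
      = ∑ a : (ZMod q)ˣ, ∑ b : (ZMod q)ˣ, ψ a * ψ b *
          ∑ χ : DirichletCharacter ℂ q, χ (c : ZMod q)⁻¹ * χ (a * b : ZMod q) := by
        simp only [expand, mul_sum]
        rw [sum_comm]
        exact sum_congr rfl fun a _ => sum_comm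
    _ = ∑ a : (ZMod q)ˣ, ψ a * ψ (a⁻¹ * c : (ZMod q)ˣ) * q.totient := by
        simp only [orth, mul_ite, mul_zero, sum_ite_eq', mem_univ, if_true]
    _ = q.totient * ∑ u : (ZMod q)ˣ, ψ u * ψ (c * ↑u⁻¹) := by
        rw [mul_sum]
        refine sum_congr rfl fun a _ => ?_
        rw [Units.val_mul, mul_comm ((a⁻¹ : (ZMod q)ˣ) : ZMod q)]
        ring

lemma gaussSum_one_stdAddChar (hq : q.Prime) :
    gaussSum (1 : MulChar (ZMod q) ℂ) ZMod.stdAddChar = -1 := by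
  have := Fact.mk hq
  refine gaussSum_one_left fun h => one_ne_zero (ZMod.injective_stdAddChar (N := q) ?_)
  rw [h, AddChar.one_apply, AddChar.one_apply]

end

namespace DirichletCharacter

open scoped Classical in
lemma sum_ite_even_conj_mul {n : ℕ} (c : ZMod n) (g : DirichletCharacter ℂ n → ℂ) :
    ∑ χ : DirichletCharacter ℂ n, (if χ.Even then starRingEnd ℂ (χ c) * g χ else 0)
      = (∑ χ : DirichletCharacter ℂ n, starRingEnd ℂ (χ c) * g χ
          + ∑ χ : DirichletCharacter ℂ n, starRingEnd ℂ (χ (-c)) * g χ) / 2 := by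
  rw [← sum_add_distrib, sum_div]
  refine sum_congr rfl fun χ _ => ?_
  rw [neg_eq_neg_one_mul, map_mul, map_mul]
  rcases χ.even_or_odd with h | h
  · rw [if_pos h, h, map_one, one_mul, add_self_div_two]
  · rw [if_neg h.not_even, h, map_neg, map_one, neg_one_mul, neg_mul, add_neg_cancel, zero_div]

lemma isPrimitive_iff_ne_one_of_prime {R : Type*} [CommMonoidWithZero R] {p : ℕ} (hp : p.Prime)
    (χ : DirichletCharacter R p) : χ.IsPrimitive ↔ χ ≠ 1 := by
  have : NeZero p := ⟨hp.ne_zero⟩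
  rw [isPrimitive_def, Ne, eq_one_iff_conductor_eq_one]
  rcases hp.eq_one_or_self_of_dvd _ χ.conductor_dvd_level with h | h <;> rw [h]
  · simp [hp.ne_one.symm]
  · simp [hp.ne_one]

open scoped Classical in
lemma sum_ite_isPrimitive_and_even {p : ℕ} (hp : p.Prime) {M : Type*} [AddCommGroup M]
    (F : DirichletCharacter ℂ p → M) :
    ∑ χ : DirichletCharacter ℂ p, (if χ.IsPrimitive ∧ χ.Even then F χ else 0)
      = ∑ χ : DirichletCharacter ℂ p, (if χ.Even then F χ else 0) - F 1 := by
  have h1 : (1 : DirichletCharacter ℂ p).Even := MulChar.one_apply isUnit_one.neg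
  rw [← Fintype.sum_ite_eq' (1 : DirichletCharacter ℂ p) F, ← sum_sub_distrib]
  refine sum_congr rfl fun χ _ => ?_
  rw [isPrimitive_iff_ne_one_of_prime hp]
  by_cases hχ : χ = 1
  · subst hχ; simp [h1]
  · simp [hχ]

end DirichletCharacter

open scoped Classical in
/-- For `q` prime and `m, n` coprime to `q`,
`Σ_{χ even primitive mod q} χ̄(mn)·τ(χ)² = (1/2)·φ(q)·(S(1,mn;q)+S(1,−mn;q)) − 1`. -/
theorem sum_even_primitive_char_gauss_sq (q : ℕ) (hq : q.Prime) [NeZero q] (m n : ℤ)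
    (hmn : IsCoprime (m * n) (q : ℤ)) :
    ∑ χ : DirichletCharacter ℂ q,
      (if χ.IsPrimitive ∧ χ.Even then
        (starRingEnd ℂ) (χ ((m : ZMod q) * (n : ZMod q))) * (gaussSum' χ) ^ 2 else 0)
    = (1 / 2 : ℂ) * (Nat.totient q : ℂ) *
        (kloosterman (1 : ZMod q) ((m : ZMod q) * (n : ZMod q))
          + kloosterman (1 : ZMod q) (-((m : ZMod q) * (n : ZMod q)))) - 1 := by
  obtain ⟨c, hc⟩ : IsUnit ((m : ZMod q) * n) :=
    isCoprime_zero_right.mp (by simpa using hmn.map (Int.castRingHom (ZMod q)))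
  rw [DirichletCharacter.sum_ite_isPrimitive_and_even hq, DirichletCharacter.sum_ite_even_conj_mul,
    ← hc, ← Units.val_neg]
  simp only [gaussSum'_eq_gaussSum, sum_conj_mul_gaussSum_sq, kloosterman_one_eq_sum_stdAddChar]
  rw [MulChar.one_apply_coe, map_one, gaussSum_one_stdAddChar hq]
  ring
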